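/- arXiv:1608.03957 — 2 statements merged into one kernel-verified Lean document; each statement's English description precedes it below -/
import Mathlib

section
/- Let a be an integer with a ≡ 3 (mod 4), let n ≥ 0, and let m = 2n + 1. Then J(a | m + 2|a|) = −J(a | m), where J(· | ·) is the Jacobi symbol. In particular, |a| is not a period of the sequence n ↦ κ_a(2n + 1). -/
/-!
Write `a = -c`, so that `c ≡ 1 (mod 4)`. For such `c` quadratic reciprocity carries no sign:
`J(c | b) = J(b | |c|)` for odd `b`, whatever the sign of `c`. Hence `J(a | b) = χ₄(b) J(b | |a|)`.
Adding `2|a|` to `b` leaves `J(b | |a|)` unchanged and, since `|a|` is odd, moves `b` by `2`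
modulo `4`, which flips `χ₄(b)`.
-/

/-- The Kronecker symbol `κ_a(n) = (a | n)` for `n : ℕ`. -/
def kron (a : ℤ) (n : ℕ) : ℤ :=
  if n = 0 then 0
  else (ZMod.χ₈ (a : ZMod 8)) ^ (padicValNat 2 n) * jacobiSym a (n / 2 ^ padicValNat 2 n)

open ZMod

theorem kron_of_odd (a : ℤ) {n : ℕ} (hn : Odd n) : kron a n = jacobiSym a n := by
  have hv : padicValNat 2 n = 0 := padicValNat.eq_zero_of_not_dvd hn.not_two_dvd_nat
  simp [kron, hn.pos.ne', hv]

theorem ZMod.χ₄_add_two (x : ZMod 4) : χ₄ (x + 2) = -χ₄ x := by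
  revert x; decide

theorem jacobiSym_eq_jacobiSym_natAbs_of_emod_four_eq_one {c : ℤ} (hc : c % 4 = 1) {b : ℕ}
    (hb : Odd b) : jacobiSym c b = jacobiSym b c.natAbs := by
  rcases Int.natAbs_eq c with hpos | hneg
  · rw [hpos] at hc ⊢
    exact jacobiSym.quadratic_reciprocity_one_mod_four (by omega) hb
  · have hC : c.natAbs % 4 = 3 := by omega
    nth_rw 1 [hneg]
    -- the two signs `χ₄(b)` from `J(-1 | b)` and from reciprocity cancel
    rw [jacobiSym.neg _ hb,
      jacobiSym.quadratic_reciprocity (Nat.odd_iff.mpr (Nat.odd_of_mod_four_eq_three hC)) hb,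
      pow_mul, neg_one_pow_div_two_of_three_mod_four hC, χ₄_eq_neg_one_pow (Nat.odd_iff.mp hb),
      ← mul_assoc, ← mul_pow, neg_one_mul, neg_neg, one_pow, one_mul]

theorem jacobiSym_add_two_natAbs_of_emod_four_eq_three {a : ℤ} (ha : a % 4 = 3) {b : ℕ}
    (hb : Odd b) : jacobiSym a (b + 2 * a.natAbs) = -jacobiSym a b := by
  obtain ⟨c, rfl⟩ : ∃ c, a = -c := ⟨-a, (neg_neg a).symm⟩
  have hc : c % 4 = 1 := by omega
  have hb' : Odd (b + 2 * c.natAbs) := hb.add_even (even_two_mul _)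
  have hshift : ((b + 2 * c.natAbs : ℕ) : ZMod 4) = ((b + 2 : ℕ) : ZMod 4) :=
    (ZMod.natCast_eq_natCast_iff _ _ _).mpr (by unfold Nat.ModEq; omega)
  have hperiod : jacobiSym (b + 2 * c.natAbs : ℕ) c.natAbs = jacobiSym b c.natAbs :=
    jacobiSym.mod_left' (by
      rw [Nat.cast_add, Nat.cast_mul, mul_comm]; exact Int.add_mul_emod_self_left ..)
  rw [Int.natAbs_neg, jacobiSym.neg _ hb, jacobiSym.neg _ hb',
    jacobiSym_eq_jacobiSym_natAbs_of_emod_four_eq_one hc hb,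
    jacobiSym_eq_jacobiSym_natAbs_of_emod_four_eq_one hc hb', hshift, Nat.cast_add,
    Nat.cast_ofNat, χ₄_add_two, hperiod, neg_mul]

theorem jacobi_antiperiod_of_three_mod_four (a : ℤ) (h : a ≡ 3 [ZMOD 4]) (n : ℕ) :
    jacobiSym a ((2 * n + 1) + 2 * a.natAbs) = - jacobiSym a (2 * n + 1) ∧
    ∃ m : ℕ, kron a (2 * (m + a.natAbs) + 1) ≠ kron a (2 * m + 1) := by
  have hflip {b : ℕ} (hb : Odd b) := jacobiSym_add_two_natAbs_of_emod_four_eq_three h hb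
  refine ⟨hflip (odd_two_mul_add_one n), 0, ?_⟩
  rw [kron_of_odd a (odd_two_mul_add_one _), kron_of_odd a (odd_two_mul_add_one _),
    show 2 * (0 + a.natAbs) + 1 = 1 + 2 * a.natAbs by ring, Nat.mul_zero, zero_add,
    hflip odd_one, jacobiSym.one_right]
  decide
end

section
/- Let a be an integer with a ≡ 3 (mod 4), let F₄ be the field with four elements (GaloisField 2 2), and let f : ℤ → F₄ be a function whose values f(−1), f(0), f(1) are pairwise distinct. Let G be the element of the Laurent series field LaurentSeries F₄ given by the power series ∑_{n ≥ 0} f(κ_a(n)) X^n. Then G is algebraic over the field of rational functions RatFunc F₄ (embedded in LaurentSeries F₄ via the canonical algebra map), and the natural degree of the minimal polynomial of G over RatFunc F₄ is either 2 or 4. -/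
section EventuallyPeriodic

open Filter

def EventuallyPeriodic {α : Type*} (u : ℕ → α) : Prop :=
  ∃ P > 0, ∀ᶠ n in atTop, u (n + P) = u n

theorem EventuallyPeriodic.of_comp {α β : Type*} {f : α → β} {u : ℕ → α}
    (hf : Set.InjOn f (Set.range u)) (h : EventuallyPeriodic (f ∘ u)) : EventuallyPeriodic u := by
  obtain ⟨P, hP, hper⟩ := h
  exact ⟨P, hP, hper.mono fun n hn ↦ hf ⟨_, rfl⟩ ⟨_, rfl⟩ hn⟩

theorem add_mul_eq_of_eventually_add_eq {α : Type*} {u : ℕ → α} {b P : ℕ} (hb : 1 < b)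
    (hu : ∀ n, u (b * n) = u n) (hP : ∀ᶠ n in atTop, u (n + P) = u n) {n : ℕ} (hn : n ≠ 0)
    (t : ℕ) : u (n + t * P) = u n := by
  obtain ⟨N, hN⟩ := eventually_atTop.mp hP
  have hper : Function.Periodic (fun k ↦ u (N + k)) P := fun k ↦ by
    simpa [add_assoc] using hN (N + k) (by omega)
  have hpow : ∀ k m, u (b ^ k * m) = u m := fun k ↦ by
    induction k with
    | zero => simp
    | succ k ih => intro m; rw [pow_succ', mul_assoc, hu, ih]
  have hNle : N ≤ b ^ N * n :=
    (Nat.lt_pow_self hb).le.trans (Nat.le_mul_of_pos_right _ (Nat.pos_of_ne_zero hn))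
  have key : u (b ^ N * n + b ^ N * t * P) = u (b ^ N * n) := by
    have := hper.nat_mul (b ^ N * t) (b ^ N * n - N)
    rwa [Nat.cast_id, ← add_assoc, Nat.add_sub_cancel' hNle] at this
  rw [← hpow N (n + t * P), mul_add, ← mul_assoc, key, hpow]

end EventuallyPeriodic

section Kronecker

variable {a : ℤ}

theorem ZMod.χ₈_int_sq_of_odd (ha : Odd a) : ZMod.χ₈ (a : ZMod 8) ^ 2 = 1 := by
  rw [ZMod.χ₈_int_eq_if_mod_eight, if_neg (by rw [Int.odd_iff] at ha; omega)]
  split_ifs <;> norm_num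

theorem kron_two_pow_mul (a : ℤ) (k : ℕ) {m : ℕ} (hm : Odd m) :
    kron a (2 ^ k * m) = ZMod.χ₈ (a : ZMod 8) ^ k * jacobiSym a m := by
  have hv : padicValNat 2 (2 ^ k * m) = k := by
    rw [padicValNat.mul (by positivity) hm.pos.ne', padicValNat.prime_pow,
      padicValNat.eq_zero_of_not_dvd hm.not_two_dvd_nat, add_zero]
  rw [kron, if_neg (by positivity [hm.pos]), hv, Nat.mul_div_cancel_left _ (by positivity)]

theorem kron_four_mul (ha : Odd a) (n : ℕ) : kron a (4 * n) = kron a n := by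
  rcases eq_or_ne n 0 with rfl | hn
  · rfl
  obtain ⟨k, m, hm, rfl⟩ := Nat.exists_eq_two_pow_mul_odd hn
  rw [show 4 * (2 ^ k * m) = 2 ^ (k + 2) * m by ring, kron_two_pow_mul a _ hm,
    kron_two_pow_mul a _ hm, pow_add, ZMod.χ₈_int_sq_of_odd ha, mul_one]

theorem kron_two_pow_mul_add (a : ℤ) (k : ℕ) {m : ℕ} (hm : Odd m) (j : ℕ) :
    kron a (2 ^ k * (m + 4 * a.natAbs * j)) = kron a (2 ^ k * m) := by
  have hm' : Odd (m + 4 * a.natAbs * j) :=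
    hm.add_even (by rw [mul_assoc]; exact (even_two_mul 2).mul_right _)
  rw [kron_two_pow_mul a k hm', kron_two_pow_mul a k hm, jacobiSym.mod_right a hm',
    jacobiSym.mod_right a hm, Nat.add_mul_mod_self_left]

theorem kron_add_eight_mul_natAbs (a : ℤ) {n : ℕ} (hn : ¬ 4 ∣ n) :
    kron a (n + 8 * a.natAbs) = kron a n := by
  obtain ⟨k, m, hm, rfl⟩ := Nat.exists_eq_two_pow_mul_odd (n := n) (by rintro rfl; simp at hn)
  have hk : k < 2 := by
    by_contra! hk
    exact hn ((pow_dvd_pow 2 hk).mul_right m)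
  rw [← kron_two_pow_mul_add a k hm (2 ^ (1 - k))]
  congr 1
  interval_cases k <;> ring

theorem periodic_ite_four_dvd_kron {R : Type*} [Zero R] (a : ℤ) (g : ℤ → R) :
    Function.Periodic (fun n ↦ if 4 ∣ n then 0 else g (kron a n)) (8 * a.natAbs) := fun n ↦ by
  have h4 : 4 ∣ 8 * a.natAbs := dvd_mul_of_dvd_left (by norm_num) _
  by_cases hn : 4 ∣ n
  · simp [hn, (Nat.dvd_add_left h4).mpr hn]
  · simp [hn, (Nat.dvd_add_left h4).not.mpr hn, kron_add_eight_mul_natAbs a hn]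

theorem kron_trichotomy (a : ℤ) (n : ℕ) : kron a n = 0 ∨ kron a n = 1 ∨ kron a n = -1 := by
  suffices (kron a n).natAbs ≤ 1 by omega
  rw [kron]
  split_ifs
  · simp
  have hχ : (ZMod.χ₈ (a : ZMod 8)).natAbs ≤ 1 := by
    rcases ZMod.isQuadratic_χ₈ (a : ZMod 8) with h | h | h <;> simp [h]
  have hJ : (jacobiSym a (n / 2 ^ padicValNat 2 n)).natAbs ≤ 1 := by
    rcases jacobiSym.trichotomy a (n / 2 ^ padicValNat 2 n) with h | h | h <;> simp [h]
  rw [Int.natAbs_mul, Int.natAbs_pow]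
  exact Nat.mul_le_mul (pow_le_one₀ (Nat.zero_le _) hχ) hJ

theorem injOn_range_kron {β : Type*} {f : ℤ → β} (hf : f (-1) ≠ f 0 ∧ f (-1) ≠ f 1 ∧ f 0 ≠ f 1)
    (a : ℤ) : Set.InjOn f (Set.range (kron a)) := by
  rintro _ ⟨m, rfl⟩ _ ⟨n, rfl⟩ hmn
  rcases kron_trichotomy a m with hm | hm | hm <;> rcases kron_trichotomy a n with hn | hn | hn <;>
    simp_all [eq_comm]

theorem jacobiSym.eq_neg_one_of_mod_four_eq_three (ha : a % 4 = 3) {m : ℕ} (hm : m % 4 = 3)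
    (hma : (m : ℤ) ≡ 1 [ZMOD a.natAbs]) : jacobiSym a m = -1 := by
  have hmodd : Odd m := Nat.odd_iff.mpr (by omega)
  have hJ : jacobiSym m a.natAbs = 1 := by rw [jacobiSym.mod_left' hma, jacobiSym.one_left]
  rcases Int.natAbs_eq a with hA | hA <;> rw [hA]
  · rw [jacobiSym.quadratic_reciprocity_three_mod_four (by omega) hm, hJ]
  · rw [neg_eq_neg_one_mul, jacobiSym.mul_left, jacobiSym.at_neg_one hmodd,
      ZMod.χ₄_nat_three_mod_four hm, jacobiSym.quadratic_reciprocity_one_mod_four (by omega) hmodd,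
      hJ, neg_one_mul]

theorem kron_two_pow_add_two_pow_succ_mul_ne (ha : a % 4 = 3) (k : ℕ) {m : ℕ} (hm : Odd m)
    (ham : a.natAbs ∣ m) : kron a (2 ^ k + 2 ^ (k + 1) * m) ≠ kron a (2 ^ k) := by
  have hodd : Odd (1 + 2 * m) := odd_one.add_even (even_two_mul m)
  have hJ : jacobiSym a (1 + 2 * m) = -1 := by
    refine jacobiSym.eq_neg_one_of_mod_four_eq_three ha (by rcases hm with ⟨c, rfl⟩; omega) ?_
    obtain ⟨c, rfl⟩ := ham
    exact Int.modEq_iff_dvd.mpr ⟨-2 * c, by push_cast; ring⟩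
  have hχ : ZMod.χ₈ (a : ZMod 8) ^ k ≠ 0 := pow_ne_zero k fun h ↦ by
    simpa [h] using ZMod.χ₈_int_sq_of_odd (Int.odd_iff.mpr (by omega) : Odd a)
  rw [show 2 ^ k + 2 ^ (k + 1) * m = 2 ^ k * (1 + 2 * m) by ring, kron_two_pow_mul a k hodd, hJ,
    ← mul_one (2 ^ k), kron_two_pow_mul a k odd_one, jacobiSym.one_right]
  intro h
  exact hχ (by linarith)

theorem kron_not_eventuallyPeriodic (ha : a % 4 = 3) : ¬ EventuallyPeriodic (kron a) := by
  rintro ⟨P, hP, hper⟩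
  have hodd : Odd a := Int.odd_iff.mpr (by omega)
  obtain ⟨k, m, hm, hkm⟩ := Nat.exists_eq_two_pow_mul_odd (n := a.natAbs * P)
    (Nat.mul_ne_zero (by omega) hP.ne')
  have ham : a.natAbs ∣ m := (Nat.Coprime.pow_right k (Int.natAbs_odd.mpr hodd).coprime_two_right
    ).dvd_of_dvd_mul_left (hkm ▸ dvd_mul_right _ _)
  apply kron_two_pow_add_two_pow_succ_mul_ne ha k hm ham
  have := add_mul_eq_of_eventually_add_eq (by norm_num : 1 < 4) (kron_four_mul hodd) hper
    (pow_ne_zero k two_ne_zero) (2 * a.natAbs)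
  rwa [mul_assoc, hkm, ← mul_assoc, ← pow_succ'] at this

end Kronecker

section PowerSeries

open Filter Polynomial PowerSeries

theorem PowerSeries.expand_card {K : Type*} [Field K] [Fintype K] (φ : K⟦X⟧) :
    expand (Fintype.card K) Fintype.card_ne_zero φ = φ ^ Fintype.card K := by
  obtain ⟨p, _⟩ := CharP.exists K
  obtain ⟨n, hp, hn⟩ := FiniteField.card K p
  have := Fact.mk hp
  have key := MvPowerSeries.map_iterateFrobenius_expand p hp.ne_zero φ n
  rw [iterateFrobenius_eq_pow, FiniteField.frobenius_pow hn, RingHom.one_def,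
    MvPowerSeries.map_id] at key
  simp_rw [hn]
  exact key

theorem PowerSeries.mk_pow_card_sub_mk {K : Type*} [Field K] [Fintype K] {u : ℕ → K}
    (hu : ∀ n, u (Fintype.card K * n) = u n) :
    mk u ^ Fintype.card K - mk u = mk fun n ↦ if Fintype.card K ∣ n then 0 else -u n := by
  ext n
  rw [map_sub, ← expand_card, coeff_expand, coeff_mk, coeff_mk, coeff_mk]
  split_ifs with h
  · obtain ⟨k, rfl⟩ := h
    rw [Nat.mul_div_cancel_left _ Fintype.card_pos, hu, sub_self]
  · rw [zero_sub]

theorem Polynomial.exists_dvd_X_pow_mul_X_pow_sub_one {K : Type*} [Field K] [Finite K] {q : K[X]}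
    (hq : q ≠ 0) : ∃ i M, 0 < M ∧ q ∣ X ^ i * (X ^ M - 1) := by
  have := (AdjoinRoot.powerBasis hq).finite
  have := Module.finite_of_finite K (M := AdjoinRoot q)
  obtain ⟨i, j, hij, hpow⟩ := Set.finite_univ.exists_lt_map_eq_of_forall_mem
    (f := fun n : ℕ ↦ AdjoinRoot.root q ^ n) fun _ ↦ Set.mem_univ _
  refine ⟨i, j - i, Nat.sub_pos_of_lt hij, AdjoinRoot.mk_eq_zero.mp ?_⟩
  simp only [map_sub, map_pow, AdjoinRoot.mk_X, mul_sub, ← pow_add,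
    Nat.add_sub_cancel' hij.le, mul_one, hpow, sub_self]

theorem PowerSeries.eventuallyPeriodic_coeff_of_X_pow_mul_X_pow_sub_one_mul {R : Type*}
    [CommRing R] {φ : R⟦X⟧} {s : R[X]} {i M : ℕ} (hM : 0 < M)
    (h : ((Polynomial.X ^ i * (Polynomial.X ^ M - 1) : R[X]) : R⟦X⟧) * φ = s) :
    EventuallyPeriodic (fun n ↦ coeff n φ) := by
  refine ⟨M, hM, eventually_atTop.mpr ⟨s.natDegree, fun n hn ↦ ?_⟩⟩
  have := congrArg (coeff (n + M + i)) h
  simp only [Polynomial.coe_mul, Polynomial.coe_sub, Polynomial.coe_pow, Polynomial.coe_X,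
    Polynomial.coe_one] at this
  rw [Polynomial.coeff_coe, coeff_eq_zero_of_natDegree_lt (by omega), mul_sub, mul_one, ← pow_add,
    sub_mul, map_sub, coeff_X_pow_mul', coeff_X_pow_mul', if_pos (by omega), if_pos (by omega),
    sub_eq_zero, show n + M + i - (i + M) = n by omega, show n + M + i - i = n + M by omega] at this
  exact this.symm

theorem RatFunc.denom_mul_eq_num_of_coe_eq {K : Type*} [Field K] {φ : K⟦X⟧} {r : RatFunc K}
    (h : (r : LaurentSeries K) = φ) : (r.denom : K⟦X⟧) * φ = r.num := by
  apply HahnSeries.ofPowerSeries_injective (Γ := ℤ)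
  rw [map_mul, ← h, coe_coe, coe_coe, ← map_mul, mul_comm]
  exact congrArg _ ((div_eq_iff (algebraMap_ne_zero r.denom_ne_zero)).mp (num_div_denom r)).symm

theorem RatFunc.eventuallyPeriodic_coeff_of_coe_eq {K : Type*} [Field K] [Finite K] {φ : K⟦X⟧}
    {r : RatFunc K} (h : (r : LaurentSeries K) = φ) : EventuallyPeriodic (fun n ↦ coeff n φ) := by
  obtain ⟨i, M, hM, g, hg⟩ := exists_dvd_X_pow_mul_X_pow_sub_one r.denom_ne_zero
  refine eventuallyPeriodic_coeff_of_X_pow_mul_X_pow_sub_one_mul (i := i) (s := r.num * g) hM ?_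
  rw [hg, Polynomial.coe_mul, Polynomial.coe_mul, mul_right_comm, denom_mul_eq_num_of_coe_eq h]

theorem RatFunc.exists_coe_eq_mk_of_periodic {K : Type*} [Field K] {c : ℕ → K} {P : ℕ}
    (hP : 0 < P) (hc : Function.Periodic c P) :
    ∃ r : RatFunc K, (r : LaurentSeries K) = PowerSeries.mk c := by
  have key : ((Polynomial.X ^ P - Polynomial.C 1 : K[X]) : K⟦X⟧) * mk c =
      -(trunc P (mk c) : K⟦X⟧) := by
    ext n
    rw [Polynomial.coe_sub, Polynomial.coe_pow, Polynomial.coe_X, Polynomial.coe_C, map_one,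
      sub_mul, one_mul, map_sub, map_neg, PowerSeries.coeff_X_pow_mul', Polynomial.coeff_coe,
      coeff_trunc, coeff_mk]
    by_cases hn : P ≤ n
    · rw [if_pos hn, if_neg (by omega), coeff_mk, ← hc, Nat.sub_add_cancel hn, sub_self, neg_zero]
    · rw [if_neg hn, if_pos (by omega), coeff_mk, zero_sub]
  have hne := X_pow_sub_C_ne_zero hP (1 : K)
  refine ⟨-(trunc P (mk c) : RatFunc K) /
    ((Polynomial.X ^ P - Polynomial.C 1 : K[X]) : RatFunc K), ?_⟩
  rw [map_div₀, map_neg, ← coe_coe, ← coe_coe, ← map_neg, ← key, map_mul, mul_div_cancel_left₀]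
  exact (map_ne_zero_iff _ HahnSeries.ofPowerSeries_injective).mpr
    (Polynomial.coe_eq_zero_iff.not.mpr hne)

end PowerSeries

section ArtinSchreier

open Polynomial

theorem natDegree_X_pow_sub_X_add_C {R : Type*} [CommRing R] [Nontrivial R] {n : ℕ} (hn : 1 < n)
    (t : R) : (X ^ n - (X + C t)).natDegree = n := by
  rw [natDegree_sub_eq_left_of_natDegree_lt] <;> simp [hn]

theorem monic_X_pow_sub_X_add_C {R : Type*} [CommRing R] [Nontrivial R] {n : ℕ} (hn : 1 < n)
    (t : R) : (X ^ n - (X + C t)).Monic :=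
  monic_X_pow_sub (by simpa [degree_X_add_C])

variable {K L : Type*} [Field K] [Field L] [Algebra K L] {x : L} {t : K} {n : ℕ}

theorem aeval_X_pow_sub_X_add_C (hx : x ^ n - x = algebraMap K L t) :
    aeval x (X ^ n - (X + C t)) = 0 := by
  simp only [map_sub, map_add, map_pow, aeval_X, aeval_C]
  linear_combination hx

theorem isIntegral_of_pow_sub_self_eq (hn : 1 < n) (hx : x ^ n - x = algebraMap K L t) :
    IsIntegral K x :=
  ⟨_, monic_X_pow_sub_X_add_C hn t, aeval_X_pow_sub_X_add_C hx⟩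

theorem natDegree_minpoly_le_of_pow_sub_self_eq (hn : 1 < n)
    (hx : x ^ n - x = algebraMap K L t) :
    (minpoly K x).natDegree ≤ n := by
  rw [← natDegree_X_pow_sub_X_add_C hn t]
  exact natDegree_le_of_dvd (minpoly.dvd K x (aeval_X_pow_sub_X_add_C hx))
    (monic_X_pow_sub_X_add_C hn t).ne_zero

variable {F : Type*} [Field F] [Fintype F]

theorem add_map_pow_card (φ : F →+* L) (x : L) (c : F) :
    (x + φ c) ^ Fintype.card F = x ^ Fintype.card F + φ c := by
  obtain ⟨p, _⟩ := CharP.exists F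
  obtain ⟨n, hp, hn⟩ := FiniteField.card F p
  have := Fact.mk hp
  have := charP_of_injective_ringHom φ.injective p
  rw [hn, add_pow_char_pow, ← map_pow, ← hn, FiniteField.pow_card]

theorem roots_X_pow_card_sub_X_add_C (φ : F →+* L)
    (hx : x ^ Fintype.card F - x = algebraMap K L t) :
    ((X ^ Fintype.card F - (X + C t)).map (algebraMap K L)).roots =
      Finset.univ.val.map (fun c ↦ x + φ c) := by
  set Q := (X ^ Fintype.card F - (X + C t)).map (algebraMap K L)
  have hQ : Q ≠ 0 := ((monic_X_pow_sub_X_add_C Fintype.one_lt_card t).map _).ne_zero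
  have hnodup : (Finset.univ.val.map (fun c ↦ x + φ c)).Nodup :=
    Finset.univ.nodup.map fun c d hcd ↦ φ.injective (add_left_cancel hcd)
  symm
  refine Multiset.eq_of_le_of_card_le ((Multiset.le_iff_subset hnodup).mpr fun y hy ↦ ?_) ?_
  · obtain ⟨c, -, rfl⟩ := Multiset.mem_map.mp hy
    rw [mem_roots hQ, IsRoot, eval_map_algebraMap]
    simp only [map_sub, map_add, map_pow, aeval_X, aeval_C, add_map_pow_card]
    linear_combination hx
  · simpa [Q, natDegree_X_pow_sub_X_add_C Fintype.one_lt_card] using card_roots' Q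

theorem dvd_natDegree_minpoly_of_pow_card_sub_self_eq [Algebra F K] (p : ℕ) [CharP F p]
    (hx : x ^ Fintype.card F - x = algebraMap K L t) (hxK : x ∉ (⊥ : IntermediateField K L)) :
    p ∣ (minpoly K x).natDegree := by
  have hint := isIntegral_of_pow_sub_self_eq (Fintype.one_lt_card (α := F)) hx
  set m := (minpoly K x).map (algebraMap K L)
  have hQ := (monic_X_pow_sub_X_add_C (Fintype.one_lt_card (α := F)) t).map (algebraMap K L)
  have hdvd := map_dvd (algebraMap K L) (minpoly.dvd K x (aeval_X_pow_sub_X_add_C hx))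
  have hroots := roots_X_pow_card_sub_X_add_C ((algebraMap K L).comp (algebraMap F K)) hx
  have hsplits : m.Splits := by
    refine Splits.of_dvd ?_ hQ.ne_zero hdvd
    rw [splits_iff_card_roots, hroots, natDegree_map,
      natDegree_X_pow_sub_X_add_C Fintype.one_lt_card]
    simp
  have hsum : m.roots.sum ∈ (⊥ : IntermediateField K L) := by
    rw [← neg_neg m.roots.sum, ← hsplits.nextCoeff_eq_neg_sum_roots_of_monic
      ((minpoly.monic hint).map _), nextCoeff_map (algebraMap K L).injective]
    exact neg_mem (IntermediateField.algebraMap_mem _ _)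
  have hshift : (m.roots.map (· - x)).sum ∈ (⊥ : IntermediateField K L) := by
    refine multiset_sum_mem _ fun y hy ↦ ?_
    obtain ⟨r, hr, rfl⟩ := Multiset.mem_map.mp hy
    have := Multiset.mem_of_le (roots.le_of_dvd hQ.ne_zero hdvd) hr
    rw [hroots] at this
    obtain ⟨c, -, rfl⟩ := Multiset.mem_map.mp this
    rw [add_sub_cancel_left]
    exact IntermediateField.algebraMap_mem _ _
  have hdx : (m.natDegree : L) * x ∈ (⊥ : IntermediateField K L) := by
    have := sub_mem hsum hshift
    rwa [Multiset.sum_map_sub, Multiset.map_id', sub_sub_cancel, Multiset.map_const',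
      Multiset.sum_replicate, splits_iff_card_roots.mp hsplits, nsmul_eq_mul] at this
  have := charP_of_injective_ringHom ((algebraMap K L).comp (algebraMap F K)).injective p
  by_contra hp
  have hd : (m.natDegree : L) ≠ 0 :=
    (CharP.cast_eq_zero_iff L p _).not.mpr (by simpa [m] using hp)
  refine hxK ?_
  simpa [hd] using mul_mem (inv_mem (natCast_mem _ m.natDegree)) hdx

end ArtinSchreier

open scoped RatFunc

section GeneratingSeries

variable {F : Type*} [Field F] {a : ℤ} {f : ℤ → F} {G : LaurentSeries F}

theorem exists_pow_card_sub_self_eq_algebraMap [Fintype F] (hF : Fintype.card F = 4) (ha : Odd a)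
    (hG : G = (PowerSeries.mk (fun n => f (kron a n)) : PowerSeries F)) :
    ∃ t : RatFunc F, G ^ Fintype.card F - G = algebraMap _ _ t := by
  have ha0 : a ≠ 0 := by rintro rfl; simp at ha
  obtain ⟨t, ht⟩ := RatFunc.exists_coe_eq_mk_of_periodic (by omega : 0 < 8 * a.natAbs)
    (periodic_ite_four_dvd_kron a fun k ↦ -f k)
  refine ⟨t, ?_⟩
  rw [hG, ← map_pow, ← map_sub, PowerSeries.mk_pow_card_sub_mk, hF]
  · exact ht.symm
  · simp [hF, kron_four_mul ha]

theorem notMem_bot_of_eq_mk_kron [Finite F] (ha : a % 4 = 3)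
    (hf : f (-1) ≠ f 0 ∧ f (-1) ≠ f 1 ∧ f 0 ≠ f 1)
    (hG : G = (PowerSeries.mk (fun n => f (kron a n)) : PowerSeries F)) :
    G ∉ (⊥ : IntermediateField (RatFunc F) (LaurentSeries F)) := by
  rintro ⟨r, hr⟩
  refine kron_not_eventuallyPeriodic ha (.of_comp (injOn_range_kron hf a) ?_)
  simpa [Function.comp_def] using RatFunc.eventuallyPeriodic_coeff_of_coe_eq (hr.trans hG)

end GeneratingSeries

theorem kron_generating_series_algebraic_degree_two_or_four
    (a : ℤ) (h : a ≡ 3 [ZMOD 4]) (f : ℤ → GaloisField 2 2)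
    (hf : f (-1) ≠ f 0 ∧ f (-1) ≠ f 1 ∧ f 0 ≠ f 1)
    (G : LaurentSeries (GaloisField 2 2))
    (hG : G = (PowerSeries.mk (fun n => f (kron a n)) : PowerSeries (GaloisField 2 2))) :
    IsAlgebraic (RatFunc (GaloisField 2 2)) G ∧
      ((minpoly (RatFunc (GaloisField 2 2)) G).natDegree = 2 ∨
        (minpoly (RatFunc (GaloisField 2 2)) G).natDegree = 4) := by
  have ha : a % 4 = 3 := h
  have : Fintype (GaloisField 2 2) := Fintype.ofFinite _
  have hcard : Fintype.card (GaloisField 2 2) = 4 := by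
    rw [← Nat.card_eq_fintype_card, GaloisField.card 2 2 two_ne_zero]; rfl
  obtain ⟨t, ht⟩ := exists_pow_card_sub_self_eq_algebraMap hcard (Int.odd_iff.mpr (by omega)) hG
  have hint := isIntegral_of_pow_sub_self_eq Fintype.one_lt_card ht
  have hle := natDegree_minpoly_le_of_pow_sub_self_eq Fintype.one_lt_card ht
  have heven := dvd_natDegree_minpoly_of_pow_card_sub_self_eq 2 ht
    (notMem_bot_of_eq_mk_kron ha hf hG)
  have hpos := minpoly.natDegree_pos hint
  exact ⟨hint.isAlgebraic, by omega⟩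
end
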